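/- Every linear automorphism φ of the evolution algebra E_n (over an algebraically closed field of characteristic ≠ 2) fixes e_1 (i.e. φ(e_1) = e_1), and its matrix (v_{jk}) in the basis {e_1,...,e_n} satisfies v_{1k} = 0 and v_{k1} = 0 for k ≥ 2, together with Σ_{k=2}^n v_{ki}² = 1 for each i ≥ 2 and Σ_{k=2}^n v_{ki}v_{kj} = 0 for i ≠ j (i.e. φᵀφ is the identity matrix). Conversely, every such matrix defines an automorphism of E_n. -/
import Mathlib

open Finset

/-- The evolution algebra `E_n` on `Fin (n+1) → F`: `eᵢ² = e₀`, `eᵢeⱼ = 0` for `i ≠ j`. -/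
def enMul {F : Type*} [Field F] {n : ℕ} (x y : Fin (n + 1) → F) : Fin (n + 1) → F :=
  fun k => if k = 0 then ∑ i, x i * y i else 0

lemma sum_single_mul (F : Type*) [Field F] (n : ℕ) (a b : Fin (n+1)) :
    ∑ i, (Pi.single a (1:F) : Fin (n+1) → F) i * (Pi.single b (1:F) : Fin (n+1) → F) i
      = if a = b then 1 else 0 := by
  simp [Pi.single_apply, ite_and, eq_comm]

lemma expand_lin (F : Type*) [Field F] (n : ℕ)
    (φ : (Fin (n + 1) → F) ≃ₗ[F] (Fin (n + 1) → F)) (z : Fin (n+1) → F) (k : Fin (n+1)) :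
    φ z k = ∑ i, z i * φ (Pi.single i 1) k := by
  have hz : z = ∑ i, z i • (Pi.single i (1:F) : Fin (n+1) → F) := by
    funext m
    simp [Pi.single_apply, Finset.sum_ite_eq]
  conv_lhs => rw [hz]
  simp [map_sum, Finset.sum_apply]

lemma enMul_single (F : Type*) [Field F] (n : ℕ) (a b : Fin (n+1)) :
    enMul (Pi.single a (1:F)) (Pi.single b 1)
      = (if a = b then (1:F) else 0) • (Pi.single 0 1 : Fin (n+1) → F) := by
  funext k
  simp only [enMul, sum_single_mul, Pi.smul_apply, Pi.single_apply, smul_eq_mul]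
  by_cases hk : k = 0 <;> by_cases hab : a = b <;> simp [hk, hab, eq_comm]

/-- **Automorphisms of `E_n`.** A linear automorphism `φ` of `E_n` is multiplicative
iff it fixes `e₀`, its matrix `V` (with `V j k = φ(eₖ) j`) has zero first row and
first column off the `(0,0)` entry, and the remaining columns are orthonormal:
`∑_{k ≠ 0} V k i * V k j = δᵢⱼ` for `i, j ≠ 0` (i.e. `φᵀφ = 1`). -/
theorem stmt_7 (F : Type*) [Field F] [IsAlgClosed F] (hchar : ringChar F ≠ 2)
    (n : ℕ) (φ : (Fin (n + 1) → F) ≃ₗ[F] (Fin (n + 1) → F)) :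
    (∀ x y, φ (enMul x y) = enMul (φ x) (φ y)) ↔
      (φ (Pi.single 0 1) = Pi.single 0 1 ∧
       (∀ k : Fin (n + 1), k ≠ 0 → φ (Pi.single k 1) 0 = 0 ∧
          φ (Pi.single 0 1) k = 0) ∧
       (∀ i j : Fin (n + 1), i ≠ 0 → j ≠ 0 →
          ∑ k ∈ univ.filter (fun k : Fin (n + 1) => k ≠ 0),
            φ (Pi.single i 1) k * φ (Pi.single j 1) k = if i = j then 1 else 0)) := by
  constructor
  · intro h
    -- Step A : φ e₀ = e₀
    have h00 := h (Pi.single 0 1) (Pi.single 0 1)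
    rw [enMul_single] at h00
    simp only [eq_self_iff_true, if_true, one_smul] at h00
    -- h00 : φ (single 0 1) = enMul (φ (single 0 1)) (φ (single 0 1))
    have hne : ∀ m : Fin (n+1), m ≠ 0 → φ (Pi.single 0 1) m = 0 := by
      intro m hm
      rw [h00]
      simp [enMul, hm]
    have hc : φ (Pi.single 0 1) 0 = (φ (Pi.single 0 1) 0) ^ 2 := by
      conv_lhs => rw [h00]
      simp only [enMul, eq_self_iff_true, if_true]
      rw [← Finset.sum_erase_add _ _ (Finset.mem_univ (0 : Fin (n+1)))]
      rw [Finset.sum_eq_zero, zero_add, sq]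
      intro m hm
      rw [hne m (Finset.ne_of_mem_erase hm), zero_mul]
    have hphi0ne : φ (Pi.single 0 1) ≠ (0 : Fin (n+1) → F) := by
      intro h0
      rw [LinearEquiv.map_eq_zero_iff] at h0
      have := congrFun h0 0
      simp at this
    have hcval : φ (Pi.single 0 1) 0 = 1 := by
      have hmul : φ (Pi.single 0 1) 0 * (φ (Pi.single 0 1) 0 - 1) = 0 := by
        ring_nf; linear_combination -hc
      rcases mul_eq_zero.1 hmul with h1 | h1
      · exfalso
        apply hphi0ne
        funext m
        by_cases hm : m = 0
        · rw [hm, h1]; rfl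
        · rw [hne m hm]; rfl
      · exact sub_eq_zero.1 h1
    have hA : φ (Pi.single 0 1) = Pi.single 0 1 := by
      funext m
      by_cases hm : m = 0
      · subst hm; simpa using hcval
      · rw [hne m hm]; simp [Pi.single_apply, hm]
    -- Step B : first row zero
    have hB : ∀ k : Fin (n+1), k ≠ 0 → φ (Pi.single k 1) 0 = 0 := by
      intro k hk
      have hk0 := h (Pi.single k 1) (Pi.single 0 1)
      rw [enMul_single, if_neg hk, zero_smul, map_zero, hA] at hk0
      have hval := congrFun hk0 0
      simp only [enMul, eq_self_iff_true, if_true, Pi.zero_apply] at hval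
      rw [eq_comm] at hval
      rwa [Finset.sum_eq_single 0 (fun m _ hm => by simp [Pi.single_apply, hm]) (by simp),
        Pi.single_eq_same, mul_one] at hval
    refine ⟨hA, fun k hk => ⟨hB k hk, by rw [hA]; simp [Pi.single_apply, hk]⟩, ?_⟩
    -- Step C : orthonormality
    intro i j hi hj
    have hij := h (Pi.single i 1) (Pi.single j 1)
    rw [enMul_single, map_smul, hA] at hij
    have hval := congrFun hij 0
    simp only [enMul, Pi.smul_apply, Pi.single_eq_same, smul_eq_mul, mul_one,
      eq_self_iff_true, if_true] at hval
    rw [← Finset.sum_erase_add _ _ (Finset.mem_univ (0 : Fin (n+1))),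
      hB i hi, zero_mul, add_zero] at hval
    rw [Finset.filter_ne']
    exact hval.symm
  · rintro ⟨h1, h2, h3⟩ x y
    -- full orthonormality
    have key : ∀ i j : Fin (n+1),
        ∑ k, φ (Pi.single i 1) k * φ (Pi.single j 1) k = if i = j then 1 else 0 := by
      intro i j
      by_cases hi : i = 0 <;> by_cases hj : j = 0
      · subst hi; subst hj; rw [h1]; simpa using sum_single_mul F n 0 0
      · subst hi
        rw [h1, if_neg (Ne.symm hj)]
        rw [Finset.sum_eq_single 0 (fun m _ hm => by simp [Pi.single_apply, hm]) (by simp)]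
        rw [Pi.single_eq_same, one_mul]
        exact (h2 j hj).1
      · subst hj
        rw [h1, if_neg hi]
        rw [Finset.sum_eq_single 0 (fun m _ hm => by simp [Pi.single_apply, hm]) (by simp)]
        rw [Pi.single_eq_same, mul_one]
        exact (h2 i hi).1
      · rw [← Finset.sum_erase_add _ _ (Finset.mem_univ (0 : Fin (n+1))),
          (h2 i hi).1, zero_mul, add_zero, ← Finset.filter_ne']
        exact h3 i j hi hj
    have hxy : enMul x y = (∑ i, x i * y i) • (Pi.single 0 1 : Fin (n+1) → F) := by
      funext k
      simp only [enMul, Pi.smul_apply, Pi.single_apply, smul_eq_mul]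
      by_cases hk : k = 0 <;> simp [hk]
    rw [hxy, map_smul, h1]
    funext m
    simp only [enMul, Pi.smul_apply, Pi.single_apply, smul_eq_mul]
    by_cases hm : m = 0
    · subst hm
      simp only [eq_self_iff_true, if_true, mul_one]
      rw [eq_comm]
      calc ∑ k, φ x k * φ y k
          = ∑ k, ∑ i, ∑ j, (x i * φ (Pi.single i 1) k) * (y j * φ (Pi.single j 1) k) := by
            refine Finset.sum_congr rfl fun k _ => ?_
            rw [expand_lin F n φ x k, expand_lin F n φ y k, Finset.sum_mul_sum]
        _ = ∑ i, ∑ j, x i * y j *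
              ∑ k, φ (Pi.single i 1) k * φ (Pi.single j 1) k := by
            rw [Finset.sum_comm]
            refine Finset.sum_congr rfl fun i _ => ?_
            rw [Finset.sum_comm]
            refine Finset.sum_congr rfl fun j _ => ?_
            rw [Finset.mul_sum]
            exact Finset.sum_congr rfl fun k _ => by ring
        _ = ∑ i, x i * y i := by
            simp_rw [key]
            simp [Finset.sum_ite_eq, mul_ite]
    · simp [hm]
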